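/- arXiv:1503.02217 — 5 statements merged into one kernel-verified Lean document; each statement's English description precedes it below -/
import Mathlib

section
/- Let θ be an m×m matrix with nonnegative real entries, let P be an M×M permutation matrix, and let P̃ ∈ 𝒫_M^m be the block matrix all of whose m² blocks equal P. Then perm(θ^↑P̃) = (perm(θ))^M. -/
open scoped BigOperators

/-- The `P`-lifting `θ^↑P` of an `m × m` matrix `θ`, where the block permutation matrices
`P_{jl}` are given by the permutations `σ j l`. -/
def Matrix.plift {R : Type*} [CommSemiring R] {m M : ℕ} (θ : Matrix (Fin m) (Fin m) R)
    (σ : Fin m → Fin m → Equiv.Perm (Fin M)) :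
    Matrix (Fin m × Fin M) (Fin m × Fin M) R :=
  Matrix.of fun p q => θ p.1 q.1 * (if σ p.1 q.1 p.2 = q.2 then 1 else 0)

/-- The permutation of `Fin m × Fin M` sending `(i, a)` to `(f a i, π⁻¹ a)`. -/
def liftEquivAux {m M : ℕ} (π : Equiv.Perm (Fin M)) (f : Fin M → Equiv.Perm (Fin m)) :
    Equiv.Perm (Fin m × Fin M) where
  toFun p := (f p.2 p.1, π⁻¹ p.2)
  invFun q := ((f (π q.2))⁻¹ q.1, π q.2)
  left_inv p := by simp
  right_inv q := by simp

lemma liftEquivAux_injective {m M : ℕ} (π : Equiv.Perm (Fin M)) :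
    Function.Injective (liftEquivAux (m := m) π) := by
  intro f g h
  funext a
  exact Equiv.ext fun i => by
    simpa [liftEquivAux] using
      congrArg (fun τ : Equiv.Perm (Fin m × Fin M) => (τ (i, a)).1) h

/-- If every block of `P̃ ∈ 𝒫_M^m` equals one and the same `M × M` permutation matrix
(the one of `π`), then `perm (θ^↑P̃) = (perm θ)^M`. -/
theorem permanent_plift_const_eq_pow {m M : ℕ} (hM : 0 < M)
    (θ : Matrix (Fin m) (Fin m) ℝ) (hθ : ∀ i j, 0 ≤ θ i j)
    (π : Equiv.Perm (Fin M)) :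
    (θ.plift fun _ _ => π).permanent = θ.permanent ^ M := by
  classical
  have hrhs : θ.permanent ^ M
      = ∑ f : Fin M → Equiv.Perm (Fin m), ∏ a : Fin M, ∏ i : Fin m, θ (f a i) i := by
    have : θ.permanent ^ M = ∏ _a : Fin M, θ.permanent := by
      simp [Finset.prod_const]
    rw [this]
    simp only [Matrix.permanent]
    rw [Finset.prod_univ_sum]
    simp [Fintype.piFinset_univ]
  rw [hrhs, Matrix.permanent]
  rw [← Finset.sum_subset
      (Finset.subset_univ (Finset.univ.image (liftEquivAux (m := m) π))) ?_]
  · rw [Finset.sum_image (fun f _ g _ h => liftEquivAux_injective π h)]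
    refine Finset.sum_congr rfl fun f _ => ?_
    have : ∀ p : Fin m × Fin M,
        (θ.plift fun _ _ => π) (liftEquivAux π f p) p = θ (f p.2 p.1) p.1 := by
      intro p
      simp [Matrix.plift, liftEquivAux]
    rw [Finset.prod_congr rfl fun p _ => this p, Fintype.prod_prod_type]
    exact Finset.prod_comm
  · intro τ _ hτ
    by_contra hne
    -- the product is nonzero, so every indicator is 1
    have hcond : ∀ p : Fin m × Fin M, π (τ p).2 = p.2 := by
      intro p
      by_contra hc
      apply hne
      refine Finset.prod_eq_zero (Finset.mem_univ p) ?_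
      simp [Matrix.plift, hc]
    apply hτ
    have hinj : ∀ a : Fin M, Function.Injective fun i : Fin m => (τ (i, a)).1 := by
      intro a i j hij
      have h2 : (τ (i, a)).2 = (τ (j, a)).2 := by
        have hi := hcond (i, a); have hj := hcond (j, a)
        exact π.injective (by simp [hi, hj])
      have : τ (i, a) = τ (j, a) := Prod.ext hij h2
      exact (Prod.ext_iff.mp (τ.injective this)).1
    refine Finset.mem_image.mpr ⟨fun a => Equiv.ofBijective _
      ((Finite.injective_iff_bijective).mp (hinj a)), Finset.mem_univ _, ?_⟩
    refine Equiv.ext fun p => Prod.ext ?_ ?_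
    · simp [liftEquivAux, Equiv.ofBijective]
    · show π⁻¹ p.2 = (τ p).2
      exact π.injective (by simp [hcond p])
end

section
/- For every m×m matrix θ with nonnegative real entries and every positive integer M, there exists P ∈ 𝒫_M^m such that perm(θ^↑P) = (perm(θ))^M; that is, the bound perm(θ^↑P) ≤ (perm(θ))^M is tight. -/
open scoped BigOperators

/-- The bound `perm (θ^↑P) ≤ (perm θ)^M` is tight: some `P ∈ 𝒫_M^m` achieves equality. -/
theorem exists_plift_permanent_eq_pow {m M : ℕ} (hM : 0 < M)
    (θ : Matrix (Fin m) (Fin m) ℝ) (hθ : ∀ i j, 0 ≤ θ i j) :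
    ∃ σ : Fin m → Fin m → Equiv.Perm (Fin M),
      (θ.plift σ).permanent = θ.permanent ^ M := by
  classical
  refine ⟨fun _ _ => 1, ?_⟩
  set A := θ.plift (fun _ _ => 1) with hA
  -- the embedding of tuples of permutations into permutations of the product
  set e : (Fin M → Equiv.Perm (Fin m)) → Equiv.Perm (Fin m × Fin M) :=
    fun f => Equiv.prodCongrLeft f with he
  have hinj : Function.Injective e := by
    intro f g h
    funext b
    refine Equiv.ext fun a => ?_
    have := congrArg (fun τ : Equiv.Perm (Fin m × Fin M) => (τ (a, b)).1) h
    simpa [he, Equiv.prodCongrLeft_apply] using this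
  have hterm : ∀ f : Fin M → Equiv.Perm (Fin m),
      (∏ p : Fin m × Fin M, A (e f p) p) = ∏ b : Fin M, ∏ a : Fin m, θ (f b a) a := by
    intro f
    rw [Fintype.prod_prod_type]
    rw [Finset.prod_comm]
    refine Finset.prod_congr rfl fun b _ => Finset.prod_congr rfl fun a _ => ?_
    simp [hA, Matrix.plift, he, Equiv.prodCongrLeft_apply]
  have hzero : ∀ τ : Equiv.Perm (Fin m × Fin M),
      τ ∉ Finset.univ.image e → (∏ p : Fin m × Fin M, A (τ p) p) = 0 := by
    intro τ hτ
    -- if all second coordinates are preserved, τ is in the image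
    by_cases hpres : ∀ p : Fin m × Fin M, (τ p).2 = p.2
    · exfalso
      apply hτ
      -- build the fiberwise permutations
      have hinj2 : ∀ b : Fin M, Function.Injective (fun a : Fin m => (τ (a, b)).1) := by
        intro b a a' hh
        have : τ (a, b) = τ (a', b) := by
          refine Prod.ext hh ?_
          rw [hpres (a, b), hpres (a', b)]
        simpa using τ.injective this
      let f : Fin M → Equiv.Perm (Fin m) := fun b =>
        Equiv.ofBijective _ (Finite.injective_iff_bijective.mp (hinj2 b))
      refine Finset.mem_image.mpr ⟨f, Finset.mem_univ _, ?_⟩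
      refine Equiv.ext fun p => ?_
      obtain ⟨a, b⟩ := p
      simp only [he, Equiv.prodCongrLeft_apply]
      refine Prod.ext ?_ (hpres (a, b)).symm
      rfl
    · push_neg at hpres
      obtain ⟨p, hp⟩ := hpres
      refine Finset.prod_eq_zero (Finset.mem_univ p) ?_
      simp [hA, Matrix.plift, hp]
  calc A.permanent = ∑ τ ∈ Finset.univ.image e, ∏ p : Fin m × Fin M, A (τ p) p := by
        rw [Matrix.permanent]
        exact (Finset.sum_subset (Finset.subset_univ _)
          (fun τ _ h => hzero τ h)).symm
    _ = ∑ f : Fin M → Equiv.Perm (Fin m), ∏ p : Fin m × Fin M, A (e f p) p := by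
        rw [Finset.sum_image (fun a _ b _ h => hinj h)]
    _ = ∑ f : Fin M → Equiv.Perm (Fin m), ∏ b : Fin M, ∏ a : Fin m, θ (f b a) a := by
        exact Finset.sum_congr rfl fun f _ => hterm f
    _ = θ.permanent ^ M := by
        rw [← Fin.prod_const M θ.permanent]
        simp only [Matrix.permanent]
        rw [Finset.prod_univ_sum]
        simp
end

section
/- Let θ be an m×m matrix over a commutative semiring and let I_M be the M×M identity matrix. Then perm(θ ⊗ I_M) = perm(I_M ⊗ θ) = (perm(θ))^M, where ⊗ denotes the Kronecker product. -/
open scoped BigOperators Kronecker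

open Equiv Finset Matrix

theorem Equiv.Perm.apply_inv_self {α : Type*} (f : Equiv.Perm α) (x : α) : f (f⁻¹ x) = x :=
  f.apply_symm_apply x

theorem Equiv.Perm.inv_apply_self {α : Type*} (f : Equiv.Perm α) (x : α) : f⁻¹ (f x) = x :=
  f.symm_apply_apply x

theorem permanent_submatrix_equiv' {R : Type*} [CommSemiring R] {n o : Type*}
    [DecidableEq n] [Fintype n] [DecidableEq o] [Fintype o]
    (e : o ≃ n) (A : Matrix n n R) :
    (A.submatrix e e).permanent = A.permanent := by
  unfold Matrix.permanent
  rw [← (Equiv.permCongr e).symm.sum_comp]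
  refine Finset.sum_congr rfl fun σ _ => ?_
  rw [← e.prod_comp]
  refine Finset.prod_congr rfl fun i _ => ?_
  simp [Matrix.submatrix_apply, Equiv.permCongr_apply]

theorem permanent_blockDiagonal' {R : Type*} [CommSemiring R] {n o : Type*}
    [DecidableEq n] [Fintype n] [DecidableEq o] [Fintype o]
    (M : o → Matrix n n R) :
    (blockDiagonal M).permanent = ∏ k, (M k).permanent := by
  unfold Matrix.permanent
  rw [Finset.prod_sum]
  simp_rw [Finset.prod_attach_univ, Finset.univ_pi_univ]
  let preserving_snd : Finset (Equiv.Perm (n × o)) := {σ | ∀ x, (σ x).snd = x.snd}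
  have mem_preserving_snd :
    ∀ {σ : Equiv.Perm (n × o)}, σ ∈ preserving_snd ↔ ∀ x, (σ x).snd = x.snd := fun {σ} =>
    Finset.mem_filter.trans ⟨fun h => h.2, fun h => ⟨Finset.mem_univ _, h⟩⟩
  rw [← Finset.sum_subset (Finset.subset_univ preserving_snd) _]
  · refine (Finset.sum_bij (fun σ _ => prodCongrLeft fun k ↦ σ k (mem_univ k)) ?_ ?_ ?_ ?_).symm
    · intro σ _
      rw [mem_preserving_snd]
      rintro ⟨-, x⟩
      simp only [prodCongrLeft_apply]
    · intro σ _ σ' _ eq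
      ext x hx k
      have :
        ∀ k x,
          prodCongrLeft (fun k => σ k (Finset.mem_univ _)) (k, x) =
            prodCongrLeft (fun k => σ' k (Finset.mem_univ _)) (k, x) :=
        fun k x => by rw [eq]
      simp only [prodCongrLeft_apply, Prod.mk_inj] at this
      exact (this k x).1
    · intro σ hσ
      rw [mem_preserving_snd] at hσ
      have hσ' : ∀ x, (σ⁻¹ x).snd = x.snd := by
        intro x
        conv_rhs => rw [← Perm.apply_inv_self σ x, hσ]
      have mk_apply_eq : ∀ k x, ((σ (x, k)).fst, k) = σ (x, k) := by
        intro k x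
        ext
        · simp only
        · simp only [hσ]
      have mk_inv_apply_eq : ∀ k x, ((σ⁻¹ (x, k)).fst, k) = σ⁻¹ (x, k) := by
        intro k x
        conv_lhs => rw [← Perm.apply_inv_self σ (x, k)]
        ext
        · simp only [Perm.apply_inv_self]
        · simp only [hσ']
      refine ⟨fun k _ => ⟨fun x => (σ (x, k)).fst, fun x => (σ⁻¹ (x, k)).fst, ?_, ?_⟩, ?_, ?_⟩
      · intro x
        simp only [mk_apply_eq, Perm.inv_apply_self]
      · intro x
        simp only [mk_inv_apply_eq, Perm.apply_inv_self]
      · apply Finset.mem_univ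
      · ext ⟨k, x⟩
        · simp only [coe_fn_mk, prodCongrLeft_apply]
        · simp only [prodCongrLeft_apply, hσ]
    · intro σ _
      rw [← Finset.univ_product_univ, Finset.prod_product_right]
      simp only [blockDiagonal_apply_eq, prodCongrLeft_apply]
  · intro σ _ hσ
    rw [mem_preserving_snd] at hσ
    obtain ⟨⟨k, x⟩, hkx⟩ := not_forall.mp hσ
    rw [Finset.prod_eq_zero (Finset.mem_univ (k, x))]
    rw [blockDiagonal_apply_ne]
    exact hkx

/-- For any `m × m` matrix `θ` over a commutative semiring,
`perm (θ ⊗ I_M) = perm (I_M ⊗ θ) = (perm θ)^M`. -/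
theorem permanent_kronecker_one {R : Type*} [CommSemiring R] {m M : ℕ}
    (θ : Matrix (Fin m) (Fin m) R) :
    (θ ⊗ₖ (1 : Matrix (Fin M) (Fin M) R)).permanent = θ.permanent ^ M ∧
    ((1 : Matrix (Fin M) (Fin M) R) ⊗ₖ θ).permanent = θ.permanent ^ M := by
  have h1 : (θ ⊗ₖ (1 : Matrix (Fin M) (Fin M) R)) = blockDiagonal (fun _ : Fin M => θ) := by
    ext ⟨i, a⟩ ⟨j, b⟩
    simp [Matrix.kroneckerMap_apply, Matrix.blockDiagonal_apply, Matrix.one_apply]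
  have h2 : ((1 : Matrix (Fin M) (Fin M) R) ⊗ₖ θ) =
      (blockDiagonal (fun _ : Fin M => θ)).submatrix (Equiv.prodComm _ _) (Equiv.prodComm _ _) := by
    ext ⟨a, i⟩ ⟨b, j⟩
    simp [Matrix.kroneckerMap_apply, Matrix.blockDiagonal_apply, Matrix.one_apply]
  constructor
  · rw [h1, permanent_blockDiagonal']
    simp
  · rw [h2, permanent_submatrix_equiv', permanent_blockDiagonal']
    simp
end

section
/- Let θ be an m×m matrix with nonnegative real entries, let M be a positive integer, let P ∈ 𝒫_M^m, and let τ ∈ S_{mM} be a permutation that is compatible with P (i.e., its permanent-product in θ^↑P is not trivially zero). Define the m×m nonnegative integer matrix R_τ = (r_{jl}) by r_{jl} = #{ i : (j−1)M < i ≤ jM and (l−1)M < τ(i) ≤ lM }. Then every row sum of R_τ equals M, every column sum of R_τ equals M, and Π_{i∈[mM]} (θ^↑P)_{i τ(i)} = Π_{j∈[m]} Π_{l∈[m]} (θ_{jl})^{r_{jl}}. -/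
open scoped BigOperators

/-- A permutation `τ` of `[m] × [M]` is compatible with the block-permutation matrix `P`
(given by `σ`), i.e. its permanent-product in `θ^↑P` is not trivially zero: the chosen entry
in each block lies on the support of the corresponding permutation matrix. -/
def Compatible {m M : ℕ} (σ : Fin m → Fin m → Equiv.Perm (Fin M))
    (τ : Equiv.Perm (Fin m × Fin M)) : Prop :=
  ∀ p : Fin m × Fin M, σ p.1 (τ p).1 p.2 = (τ p).2

/-- The exponent matrix `R_τ`: its `(j,l)` entry counts the rows `i` of block row `j`
for which `τ(i)` falls in block column `l`. -/
def expMatrix {m M : ℕ} (τ : Equiv.Perm (Fin m × Fin M)) : Matrix (Fin m) (Fin m) ℕ :=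
  Matrix.of fun j l => (Finset.univ.filter fun u : Fin M => (τ (j, u)).1 = l).card

/-- The exponent matrix of a not trivially zero permanent-product of `θ^↑P` has all row and
column sums equal to `M`, and the permanent-product equals `∏_{j,l} θ_{jl}^{r_{jl}}`. -/
theorem expMatrix_rowcol_sums_and_product {m M : ℕ} (hM : 0 < M)
    (θ : Matrix (Fin m) (Fin m) ℝ) (hθ : ∀ i j, 0 ≤ θ i j)
    (σ : Fin m → Fin m → Equiv.Perm (Fin M))
    (τ : Equiv.Perm (Fin m × Fin M)) (hτ : Compatible σ τ) :
    (∀ j, ∑ l, expMatrix τ j l = M) ∧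
    (∀ l, ∑ j, expMatrix τ j l = M) ∧
    ∏ p : Fin m × Fin M, θ.plift σ p (τ p) =
      ∏ j : Fin m, ∏ l : Fin m, θ j l ^ expMatrix τ j l := by
  refine ⟨?_, ?_, ?_⟩
  · intro j
    simp only [expMatrix, Matrix.of_apply]
    rw [← Finset.card_eq_sum_card_fiberwise (fun u _ => Finset.mem_univ _)]
    simp
  · intro l
    have h1 : ∀ j : Fin m, expMatrix τ j l =
        (Finset.univ.filter fun p : Fin m × Fin M => p.1 = j ∧ (τ p).1 = l).card := by
      intro j
      simp only [expMatrix, Matrix.of_apply]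
      apply Finset.card_bij' (fun u _ => (j, u)) (fun p _ => p.2)
      · intro u hu; simp at hu ⊢; exact hu
      · intro p hp
        obtain ⟨p1, p2⟩ := p
        simp at hp ⊢
        obtain ⟨rfl, h2⟩ := hp
        exact h2
      · intro u hu; rfl
      · intro p hp; simp at hp; rw [← hp.1]
    have h2 : (Finset.univ.filter fun p : Fin m × Fin M => (τ p).1 = l).card = M := by
      rw [show (Finset.univ.filter fun p : Fin m × Fin M => (τ p).1 = l).card
          = (Finset.univ.filter fun q : Fin m × Fin M => q.1 = l).card from ?_]
      · rw [Finset.card_filter, Fintype.sum_prod_type]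
        simp [apply_ite Finset.card, Finset.sum_ite_eq']
      · apply Finset.card_bij' (fun p _ => τ p) (fun q _ => τ.symm q) <;>
          intro x hx <;> simp_all
    simp only [h1, Finset.card_filter]
    rw [Finset.sum_comm]
    have h3 : ∀ p : Fin m × Fin M,
        (∑ x : Fin m, if p.1 = x ∧ (τ p).1 = l then 1 else 0) =
          if (τ p).1 = l then (1 : ℕ) else 0 := by
      intro p; simp [ite_and, Finset.sum_ite_eq]
    rw [Finset.sum_congr rfl fun p _ => h3 p, ← Finset.card_filter]
    exact h2
  · have hp : ∀ p : Fin m × Fin M, θ.plift σ p (τ p) = θ p.1 (τ p).1 := by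
      intro p; simp [Matrix.plift, hτ p]
    simp only [hp]
    rw [Fintype.prod_prod_type]
    congr 1; funext j
    rw [← Finset.prod_fiberwise_of_maps_to (g := fun u : Fin M => (τ (j, u)).1)
        (fun u _ => Finset.mem_univ _) (fun u => θ j (τ (j, u)).1)]
    congr 1; funext l
    rw [Finset.prod_congr rfl (fun u hu => by
      rw [(Finset.mem_filter.mp hu).2]), Finset.prod_const]
    rfl
end

section
/- Let θ be an m×m matrix with nonnegative real entries, let M be a positive integer, let P ∈ 𝒫_M^m, and let τ ∈ S_{mM} be a permutation compatible with P. Then there exist (not necessarily unique) nonnegative integers t_{τσ} ≤ M, indexed by σ ∈ S_m, with Σ_{σ ∈ S_m} t_{τσ} = M, such that Π_{i∈[mM]} (θ^↑P)_{i τ(i)} = Π_{σ ∈ S_m} ( θ_{1σ(1)} θ_{2σ(2)} ⋯ θ_{mσ(m)} )^{t_{τσ}}. -/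
open scoped BigOperators

/-- Integer Birkhoff decomposition: a nonnegative integer matrix with all row and column
sums equal to `M` is a sum of `M` permutation matrices. -/
lemma int_birkhoff {m : ℕ} : ∀ (M : ℕ) (N : Matrix (Fin m) (Fin m) ℕ),
    (∀ j, ∑ l, N j l = M) → (∀ l, ∑ j, N j l = M) →
    ∃ t : Equiv.Perm (Fin m) → ℕ,
      (∑ σ' : Equiv.Perm (Fin m), t σ') = M ∧
      ∀ j l, N j l = ∑ σ' : Equiv.Perm (Fin m), t σ' * (if σ' j = l then 1 else 0) := by
  intro M
  induction M with
  | zero =>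
    intro N hrow _
    refine ⟨fun _ => 0, by simp, fun j l => ?_⟩
    have : N j l = 0 := by
      have := hrow j
      have h := Finset.sum_eq_zero_iff.mp this l (Finset.mem_univ l)
      simpa using h
    simp [this]
  | succ M ih =>
    intro N hrow hcol
    -- Hall's condition for the bipartite graph of positive entries
    set T : Fin m → Finset (Fin m) := fun j => Finset.univ.filter fun l => 0 < N j l with hT
    have hall : ∀ s : Finset (Fin m), s.card ≤ (s.biUnion T).card := by
      intro s
      have key : (M + 1) * s.card ≤ (M + 1) * (s.biUnion T).card := by
        calc (M + 1) * s.card = ∑ j ∈ s, (M + 1) := by rw [Finset.sum_const]; ring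
          _ = ∑ j ∈ s, ∑ l, N j l := by
              refine Finset.sum_congr rfl fun j _ => (hrow j).symm
          _ = ∑ j ∈ s, ∑ l ∈ s.biUnion T, N j l := by
              refine Finset.sum_congr rfl fun j hj => ?_
              refine (Finset.sum_subset (Finset.subset_univ _) fun l _ hl => ?_).symm
              by_contra h
              exact hl (Finset.mem_biUnion.mpr ⟨j, hj, by
                simp [hT, Nat.pos_of_ne_zero h]⟩)
          _ ≤ ∑ j, ∑ l ∈ s.biUnion T, N j l := by
              exact Finset.sum_le_sum_of_subset (Finset.subset_univ s)
          _ = ∑ l ∈ s.biUnion T, ∑ j, N j l := Finset.sum_comm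
          _ = ∑ l ∈ s.biUnion T, (M + 1) := by
              refine Finset.sum_congr rfl fun l _ => hcol l
          _ = (M + 1) * (s.biUnion T).card := by rw [Finset.sum_const]; ring
      exact Nat.le_of_mul_le_mul_left key (Nat.succ_pos M)
    obtain ⟨f, hfinj, hfmem⟩ := (Finset.all_card_le_biUnion_card_iff_exists_injective T).mp hall
    have hfbij : Function.Bijective f := (Finite.injective_iff_bijective).mp hfinj
    let π : Equiv.Perm (Fin m) := Equiv.ofBijective f hfbij
    have hπ : ∀ j, 0 < N j (π j) := fun j => by
      have := hfmem j
      simpa [hT, π] using this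
    -- subtract the permutation matrix of π
    set N' : Matrix (Fin m) (Fin m) ℕ :=
      fun j l => N j l - (if π j = l then 1 else 0) with hN'
    have hle : ∀ j l, (if π j = l then 1 else 0) ≤ N j l := by
      intro j l
      by_cases h : π j = l
      · subst h; rw [if_pos rfl]; exact hπ j
      · simp [h]
    have hrow' : ∀ j, ∑ l, N' j l = M := by
      intro j
      rw [hN']
      rw [Finset.sum_tsub_distrib _ (fun l _ => hle j l)]
      rw [hrow j]
      simp
    have hcol' : ∀ l, ∑ j, N' j l = M := by
      intro l
      rw [hN']
      rw [Finset.sum_tsub_distrib _ (fun j _ => hle j l)]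
      rw [hcol l]
      have h1 : ∑ j, (if π j = l then 1 else 0) = 1 := by
        simp [Equiv.apply_eq_iff_eq_symm_apply]
      rw [h1]
      omega
    obtain ⟨t', ht'sum, ht'⟩ := ih N' hrow' hcol'
    refine ⟨fun σ' => t' σ' + (if σ' = π then 1 else 0), ?_, ?_⟩
    · rw [Finset.sum_add_distrib, ht'sum]
      simp
    · intro j l
      have : N j l = N' j l + (if π j = l then 1 else 0) := by
        rw [hN']; exact (Nat.sub_add_cancel (hle j l)).symm
      rw [this, ht' j l]
      rw [Finset.sum_congr rfl (fun σ' _ => (add_mul (t' σ') _ _))]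
      rw [Finset.sum_add_distrib]
      congr 1
      have hx : ∀ x : Equiv.Perm (Fin m),
          (if x = π then 1 else 0) * (if x j = l then 1 else 0)
            = (if x = π then (if π j = l then (1:ℕ) else 0) else 0) := by
        intro x; by_cases h : x = π <;> simp [h]
      rw [Finset.sum_congr rfl fun x _ => hx x, Finset.sum_ite_eq' Finset.univ π]
      simp

/-- Every (not trivially zero) permanent-product of `θ^↑P` decomposes as a product of `M`
permanent-products of `θ`: there are `t_{τσ'} ≤ M` with `∑_{σ'} t_{τσ'} = M` and
`∏_i (θ^↑P)_{i τ(i)} = ∏_{σ' ∈ S_m} (θ_{1σ'(1)} ⋯ θ_{mσ'(m)})^{t_{τσ'}}`. -/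
theorem permanent_product_decomposition {m M : ℕ} (hM : 0 < M)
    (θ : Matrix (Fin m) (Fin m) ℝ) (hθ : ∀ i j, 0 ≤ θ i j)
    (σ : Fin m → Fin m → Equiv.Perm (Fin M))
    (τ : Equiv.Perm (Fin m × Fin M)) (hτ : Compatible σ τ) :
    ∃ t : Equiv.Perm (Fin m) → ℕ,
      (∀ σ' : Equiv.Perm (Fin m), t σ' ≤ M) ∧
      (∑ σ' : Equiv.Perm (Fin m), t σ') = M ∧
      ∏ p : Fin m × Fin M, θ.plift σ p (τ p) =
        ∏ σ' : Equiv.Perm (Fin m), (∏ i : Fin m, θ i (σ' i)) ^ t σ' := by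
  classical
  -- the block-count matrix
  set N : Matrix (Fin m) (Fin m) ℕ :=
    fun j l => ∑ u : Fin M, if (τ (j, u)).1 = l then 1 else 0 with hN
  have hrow : ∀ j, ∑ l, N j l = M := by
    intro j
    rw [hN, Finset.sum_comm]
    simp
  have hcol : ∀ l, ∑ j, N j l = M := by
    intro l
    have h1 : ∑ j, N j l = ∑ p : Fin m × Fin M, if (τ p).1 = l then 1 else 0 := by
      rw [Fintype.sum_prod_type]
    have h2 : ∑ p : Fin m × Fin M, (if (τ p).1 = l then 1 else 0)
        = ∑ p : Fin m × Fin M, if p.1 = l then 1 else 0 :=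
      Equiv.sum_comp τ (fun p => if p.1 = l then 1 else 0)
    rw [h1, h2, Fintype.sum_prod_type]
    simp [apply_ite Finset.card]
  obtain ⟨t, htsum, ht⟩ := int_birkhoff M N hrow hcol
  refine ⟨t, fun σ' => htsum ▸ Finset.single_le_sum (fun _ _ => Nat.zero_le _)
    (Finset.mem_univ σ'), htsum, ?_⟩
  -- LHS = ∏_{j,l} θ j l ^ N j l
  have lhs1 : ∏ p : Fin m × Fin M, θ.plift σ p (τ p) = ∏ p : Fin m × Fin M, θ p.1 (τ p).1 := by
    refine Finset.prod_congr rfl fun p _ => ?_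
    simp [Matrix.plift, hτ p]
  have lhs2 : ∏ p : Fin m × Fin M, θ p.1 (τ p).1 = ∏ j : Fin m, ∏ l : Fin m, θ j l ^ N j l := by
    rw [Fintype.prod_prod_type]
    refine Finset.prod_congr rfl fun j _ => ?_
    have := Finset.prod_fiberwise_of_maps_to
      (s := Finset.univ) (g := fun u : Fin M => (τ (j, u)).1) (t := Finset.univ)
      (fun u _ => Finset.mem_univ _) (fun u => θ j (τ (j, u)).1)
    rw [← this]
    refine Finset.prod_congr rfl fun l _ => ?_
    have hcard : N j l = (Finset.univ.filter fun u : Fin M => (τ (j, u)).1 = l).card := by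
      rw [hN, Finset.card_filter]
    rw [hcard, ← Finset.prod_const]
    refine Finset.prod_congr rfl fun u hu => ?_
    rw [(Finset.mem_filter.mp hu).2]
  -- RHS = ∏_{j,l} θ j l ^ (∑_{σ'} t σ' * [σ' j = l])
  have rhs : ∏ σ' : Equiv.Perm (Fin m), (∏ i : Fin m, θ i (σ' i)) ^ t σ'
      = ∏ j : Fin m, ∏ l : Fin m, θ j l ^ N j l := by
    have e1 : ∀ σ' : Equiv.Perm (Fin m), (∏ i : Fin m, θ i (σ' i)) ^ t σ'
        = ∏ i : Fin m, ∏ l : Fin m, θ i l ^ (t σ' * if σ' i = l then 1 else 0) := by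
      intro σ'
      rw [← Finset.prod_pow]
      refine Finset.prod_congr rfl fun i _ => ?_
      rw [Finset.prod_congr rfl (fun l (_ : l ∈ Finset.univ) => by
        rw [mul_ite, mul_one, mul_zero, pow_ite, pow_zero] :
          ∀ l ∈ Finset.univ, θ i l ^ (t σ' * if σ' i = l then 1 else 0)
            = if σ' i = l then θ i l ^ t σ' else 1)]
      rw [Finset.prod_ite_eq]
      simp
    rw [Finset.prod_congr rfl fun σ' _ => e1 σ', Finset.prod_comm]
    refine Finset.prod_congr rfl fun j _ => ?_
    rw [Finset.prod_comm]
    refine Finset.prod_congr rfl fun l _ => ?_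
    rw [Finset.prod_pow_eq_pow_sum, ← ht j l]
  rw [lhs1, lhs2, rhs]
end
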